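/- arXiv:2004.05638 — 4 statements merged into one kernel-verified Lean document; each statement's English description precedes it below -/
import Mathlib

section
/- Let η ∈ (0,1] and M > 0. For ρ ∈ S₂, one has G_{η,M}(ρ) = 0 if and only if ρ = ρ_g or ρ = ρ_e, where ρ_g := diag(1,0) and ρ_e := diag(0,1). -/
open Matrix Complex
open scoped ComplexOrder

/-- Pauli matrix σz. -/
noncomputable def sz : Matrix (Fin 2) (Fin 2) ℂ := !![1, 0; 0, -1]

/-- The set of 2×2 density matrices. -/
def S2 : Set (Matrix (Fin 2) (Fin 2) ℂ) :=
  {ρ | ρᴴ = ρ ∧ ρ.trace = 1 ∧ ρ.PosSemidef}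

/-- The diffusion operator G_{η,M}(ρ) = (√(ηM)/2)(σzρ + ρσz − 2Tr(σzρ)ρ). -/
noncomputable def Gop (η M : ℝ) (ρ : Matrix (Fin 2) (Fin 2) ℂ) : Matrix (Fin 2) (Fin 2) ℂ :=
  ((Real.sqrt (η * M) : ℂ) / 2) • (sz * ρ + ρ * sz - (2 * (sz * ρ).trace) • ρ)

/-- The ground state ρ_g = diag(1,0). -/
noncomputable def rhoG : Matrix (Fin 2) (Fin 2) ℂ := !![1, 0; 0, 0]
/-- The excited state ρ_e = diag(0,1). -/
noncomputable def rhoE : Matrix (Fin 2) (Fin 2) ℂ := !![0, 0; 0, 1]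

theorem diffusion_vanishes_iff (η M : ℝ) (hη : η ∈ Set.Ioc (0 : ℝ) 1) (hM : 0 < M)
    (ρ : Matrix (Fin 2) (Fin 2) ℂ) (hρ : ρ ∈ S2) :
    Gop η M ρ = 0 ↔ ρ = rhoG ∨ ρ = rhoE := by
  obtain ⟨hη0, -⟩ := hη
  obtain ⟨hherm, htr, hpsd⟩ := hρ
  have hc : ((Real.sqrt (η * M) : ℂ) / 2) ≠ 0 := by
    have h1 : Real.sqrt (η * M) ≠ 0 := by positivity
    simp [div_eq_zero_iff, Complex.ofReal_eq_zero, h1]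
  have htr2 : ρ 0 0 + ρ 1 1 = 1 := by
    simpa [Matrix.trace_fin_two] using htr
  constructor
  · intro h
    have hbr : sz * ρ + ρ * sz - (2 * (sz * ρ).trace) • ρ = 0 := by
      unfold Gop at h
      exact (smul_eq_zero.mp h).resolve_left hc
    have h00 := congrFun (congrFun hbr 0) 0
    have h01 := congrFun (congrFun hbr 0) 1
    have h10 := congrFun (congrFun hbr 1) 0
    simp [sz, Matrix.mul_apply, Fin.sum_univ_two, Matrix.trace_fin_two,
      Matrix.vecMul, dotProduct, Matrix.vecHead, Matrix.vecTail,
      Matrix.add_apply, Matrix.sub_apply, Matrix.smul_apply, Matrix.zero_apply] at h00 h01 h10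
    -- h00 : ρ 0 0 + ρ 0 0 - 2*(ρ 0 0 - ρ 1 1)*ρ 0 0 = 0 (some form)
    have hd : ρ 1 1 = 1 - ρ 0 0 := by linear_combination htr2
    have key : ρ 0 0 = 1 ∨ ρ 0 0 = 0 := by
      have : ρ 0 0 * (1 - ρ 0 0) = 0 := by
        rw [hd] at h00; ring_nf at h00 ⊢; linear_combination h00 / 4
      rcases mul_eq_zero.mp this with h | h
      · right; exact h
      · left; linear_combination -h
    rcases key with ha | ha
    · left
      have hd0 : ρ 1 1 = 0 := by rw [hd, ha]; ring
      have hdiff : ρ 0 0 - ρ 1 1 = 1 := by rw [ha, hd0]; ring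
      have hb : ρ 0 1 = 0 := h01.resolve_left (by rw [ha, hd0]; norm_num)
      have hcz : ρ 1 0 = 0 := h10.resolve_left (by rw [ha, hd0]; norm_num)
      ext i j
      fin_cases i <;> fin_cases j <;> simp [rhoG, ha, hd0, hb, hcz]
    · right
      have hd0 : ρ 1 1 = 1 := by rw [hd, ha]; ring
      have hb : ρ 0 1 = 0 := h01.resolve_left (by rw [ha, hd0]; norm_num)
      have hcz : ρ 1 0 = 0 := h10.resolve_left (by rw [ha, hd0]; norm_num)
      ext i j
      fin_cases i <;> fin_cases j <;> simp [rhoE, ha, hd0, hb, hcz]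
  · rintro (rfl | rfl) <;>
    · unfold Gop
      ext i j
      fin_cases i <;> fin_cases j <;>
        simp [sz, rhoG, rhoE, Matrix.mul_apply, Fin.sum_univ_two, Matrix.trace_fin_two,
          Matrix.vecMul, dotProduct, Matrix.vecHead, Matrix.vecTail,
          Matrix.add_apply, Matrix.sub_apply, Matrix.smul_apply] <;> norm_num
end

section
/- Let η, η̂ ∈ (0,1], M, M̂ > 0, C > 0 and α > 1/2, and let Γ ∈ (2η̂M̂, 2η̂M̂ + 2√(ηη̂MM̂)). Then there exists ε > 0 such that for all real numbers z, x̂, ŷ, ẑ with z ∈ [−1, −1+ε), x̂² + ŷ² + ẑ² ≤ 1 and ẑ ∈ (1−ε, 1], and for every u ∈ ℝ with |u| ≤ C(1−ẑ)^α, one has u·x̂ + (1−ẑ²)·E(z,ẑ) ≥ Γ·(1−ẑ), where E(z,ẑ) := √(η̂M̂)(√(η̂M̂)·ẑ − √(ηM)·z). -/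
/-- E(z,ẑ) := √(η̂M̂)(√(η̂M̂)·ẑ − √(ηM)·z). -/
noncomputable def Efun (η η' M M' z z' : ℝ) : ℝ :=
  Real.sqrt (η' * M') * (Real.sqrt (η' * M') * z' - Real.sqrt (η * M) * z)

set_option maxHeartbeats 1000000 in
theorem drift_estimate_near_unstable_equilibrium (η η' M M' C α Γ : ℝ)
    (hη : η ∈ Set.Ioc (0 : ℝ) 1) (hη' : η' ∈ Set.Ioc (0 : ℝ) 1)
    (hM : 0 < M) (hM' : 0 < M') (hC : 0 < C) (hα : 1/2 < α)
    (hΓ : Γ ∈ Set.Ioo (2 * η' * M') (2 * η' * M' + 2 * Real.sqrt (η * η' * M * M'))) :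
    ∃ ε > 0, ∀ z x' y' z' u : ℝ,
      -1 ≤ z → z < -1 + ε →
      x' ^ 2 + y' ^ 2 + z' ^ 2 ≤ 1 → 1 - ε < z' → z' ≤ 1 →
      |u| ≤ C * (1 - z') ^ α →
      Γ * (1 - z') ≤ u * x' + (1 - z' ^ 2) * Efun η η' M M' z z' := by
  obtain ⟨hη0, hη1⟩ := hη
  obtain ⟨hη'0, hη'1⟩ := hη'
  obtain ⟨hΓl, hΓr⟩ := hΓ
  set a := Real.sqrt (η' * M') with ha
  set b := Real.sqrt (η * M) with hb
  have ha0 : 0 < a := Real.sqrt_pos.mpr (by positivity)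
  have hb0 : 0 < b := Real.sqrt_pos.mpr (by positivity)
  have hab : a * b = Real.sqrt (η * η' * M * M') := by
    rw [ha, hb, ← Real.sqrt_mul (by positivity)]
    congr 1; ring
  have ha2 : a ^ 2 = η' * M' := Real.sq_sqrt (by positivity)
  set K := 2 * η' * M' + 2 * Real.sqrt (η * η' * M * M') with hKdef
  have hK : K = 2 * a ^ 2 + 2 * (a * b) := by rw [hKdef, ha2, hab]; ring
  have hK0 : 0 < K := by rw [hKdef]; positivity
  set δ := K - Γ with hδ
  have hδ0 : 0 < δ := by simp only [hδ, hKdef]; linarith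
  set p := α - 1/2 with hp
  have hp0 : 0 < p := by simp only [hp]; linarith
  have hc0 : 0 < Real.sqrt 2 * C := by positivity
  set X := δ / (2 * (Real.sqrt 2 * C)) with hX
  have hX0 : 0 < X := by positivity
  refine ⟨min 1 (min (δ / (3 * K)) (X ^ p⁻¹)), by positivity, ?_⟩
  set ε := min 1 (min (δ / (3 * K)) (X ^ p⁻¹)) with hε
  have hε1 : ε ≤ 1 := min_le_left _ _
  have hε2 : ε ≤ δ / (3 * K) := le_trans (min_le_right _ _) (min_le_left _ _)
  have hε3 : ε ≤ X ^ p⁻¹ := le_trans (min_le_right _ _) (min_le_right _ _)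
  clear_value a b K δ p X ε
  intro z x' y' z' u hz1 hz2 hball hz'1 hz'2 hu
  have hEf : Efun η η' M M' z z' = a * (a * z' - b * z) := by
    rw [Efun, ← ha, ← hb]
  set s := 1 - z' with hs
  clear_value s
  have hs0 : 0 ≤ s := by simp only [hs]; linarith
  rcases eq_or_lt_of_le hs0 with hseq | hspos
  · -- s = 0, i.e. z' = 1
    have hz'e : z' = 1 := by simp only [hs] at hseq; linarith
    have hu0 : u = 0 := by
      have hz : C * s ^ α = 0 := by
        rw [← hseq]; simp [Real.zero_rpow (by positivity : α ≠ 0)]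
      have := le_antisymm (hz ▸ hu) (abs_nonneg u)
      exact abs_eq_zero.mp this
    have hs0' : s = 0 := hseq.symm
    rw [hs0', hu0, hz'e]; simp
  · -- s > 0
    have hx2 : x' ^ 2 ≤ 1 - z' ^ 2 := by linarith [sq_nonneg y']
    have hx'le : |x'| ≤ Real.sqrt 2 * Real.sqrt s := by
      rw [← Real.sqrt_sq_eq_abs, ← Real.sqrt_mul (by norm_num : (0:ℝ) ≤ 2)]
      apply Real.sqrt_le_sqrt
      have h3 : 1 - z' ^ 2 = s * (1 + z') := by simp only [hs]; ring
      have h4 : s * (1 + z') ≤ s * 2 := mul_le_mul_of_nonneg_left (by linarith) hs0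
      linarith
    have hrt : Real.sqrt s = s ^ (1/2 : ℝ) := Real.sqrt_eq_rpow s
    have hpow : s ^ α * s ^ (1/2 : ℝ) = s ^ p * s := by
      rw [← Real.rpow_add hspos, show α + 1/2 = p + 1 by simp only [hp]; ring,
        Real.rpow_add hspos, Real.rpow_one]
    have hsε : s ≤ ε := by simp only [hs]; linarith
    have hsp : s ^ p ≤ X := by
      have hsle : s ≤ X ^ p⁻¹ := le_trans hsε hε3
      calc s ^ p ≤ (X ^ p⁻¹) ^ p := Real.rpow_le_rpow hs0 hsle hp0.le
        _ = X := Real.rpow_inv_rpow hX0.le hp0.ne'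
    have hux : |u * x'| ≤ δ / 2 * s := by
      calc |u * x'| = |u| * |x'| := abs_mul u x'
        _ ≤ (C * s ^ α) * (Real.sqrt 2 * Real.sqrt s) := by
            apply mul_le_mul hu hx'le (abs_nonneg x')
            positivity
        _ = Real.sqrt 2 * C * (s ^ α * s ^ (1/2 : ℝ)) := by
            rw [hrt]; ring
        _ = Real.sqrt 2 * C * (s ^ p * s) := by rw [hpow]
        _ ≤ Real.sqrt 2 * C * (X * s) := by
            apply mul_le_mul_of_nonneg_left _ hc0.le
            exact mul_le_mul_of_nonneg_right hsp hs0
        _ = δ / 2 * s := by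
            rw [hX]; field_simp
    have hE : (1 - ε) * (a ^ 2 + a * b) ≤ Efun η η' M M' z z' := by
      rw [hEf]
      have h1 : a ^ 2 * (1 - ε) ≤ a ^ 2 * z' :=
        mul_le_mul_of_nonneg_left (by linarith) (sq_nonneg a)
      have h2 : a * b * (1 - ε) ≤ a * b * (-z) :=
        mul_le_mul_of_nonneg_left (by linarith) (mul_nonneg ha0.le hb0.le)
      have h3 : a * (a * z' - b * z) = a ^ 2 * z' + a * b * (-z) := by ring
      rw [h3]; linarith
    have h1z2 : (2 - ε) * s ≤ 1 - z' ^ 2 := by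
      have : 1 - z' ^ 2 = s * (1 + z') := by simp only [hs]; ring
      rw [this]
      have h4 : s * (2 - ε) ≤ s * (1 + z') := mul_le_mul_of_nonneg_left (by linarith) hs0
      linarith
    have hEnn : 0 ≤ (1 - ε) * (a ^ 2 + a * b) := by
      apply mul_nonneg (by linarith)
      positivity
    have hprod : (2 - ε) * s * ((1 - ε) * (a ^ 2 + a * b)) ≤
        (1 - z' ^ 2) * Efun η η' M M' z z' := by
      apply mul_le_mul h1z2 hE hEnn
      have h5 : 0 ≤ (2 - ε) * s := mul_nonneg (by linarith) hs0
      linarith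
    have hεK : 6 * (ε * (a ^ 2 + a * b)) ≤ δ := by
      have h3K : 0 < 3 * K := by linarith
      have h6 : ε * (3 * K) ≤ δ := by
        rw [← le_div_iff₀ h3K] at *; exact hε2
      rw [hK] at h6; linarith
    have hL : K - δ / 2 ≤ (2 - ε) * ((1 - ε) * (a ^ 2 + a * b)) := by
      have hab0 : (0:ℝ) ≤ a ^ 2 + a * b := by positivity
      have h7 : 0 ≤ ε ^ 2 * (a ^ 2 + a * b) := mul_nonneg (sq_nonneg ε) hab0
      have hexp : (2 - ε) * ((1 - ε) * (a ^ 2 + a * b))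
          = 2 * (a ^ 2 + a * b) - 3 * (ε * (a ^ 2 + a * b)) + ε ^ 2 * (a ^ 2 + a * b) := by
        ring
      rw [hK, hexp]; linarith [h7, hεK]
    have hΓK : Γ = K - δ := by simp only [hδ]; ring
    have huxlb : -(δ / 2 * s) ≤ u * x' := by
      have := neg_abs_le (u * x')
      linarith
    calc Γ * s = (K - δ) * s := by rw [hΓK]
      _ ≤ (2 - ε) * s * ((1 - ε) * (a ^ 2 + a * b)) - δ / 2 * s := by
          linarith [mul_le_mul_of_nonneg_right hL hs0]
      _ ≤ u * x' + (1 - z' ^ 2) * Efun η η' M M' z z' := by linarith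
end

section
/- Let c > 0 and α > 1/2. Then for every ε > 0 there exists δ > 0 such that for all real x, y, z, x̂, ŷ, ẑ, u with x² + y² + z² ≤ 1, x̂² + ŷ² + ẑ² ≤ 1, 1−δ < z < 1, 1−δ < ẑ < 1 and |u| ≤ c(1−ẑ)^α, one has |u · (1/2)(x(1−z)^{−1/2} + x̂(1−ẑ)^{−1/2})| / (√(1−z) + √(1−ẑ)) < ε. In other words, u·U₁/V tends to 0 as (z,ẑ) → (1,1) uniformly over such points and admissible controls. -/
lemma aux_U1_bound (x y z : ℝ) (h : x ^ 2 + y ^ 2 + z ^ 2 ≤ 1) (hz : z < 1) :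
    |x * (1 - z) ^ (-(1/2) : ℝ)| ≤ Real.sqrt 2 := by
  have hs : (0:ℝ) < 1 - z := by linarith
  have hx2 : x ^ 2 ≤ 2 * (1 - z) := by nlinarith [sq_nonneg y, sq_nonneg (1 - z)]
  have hxa : |x| ≤ Real.sqrt 2 * Real.sqrt (1 - z) := by
    rw [← Real.sqrt_sq_eq_abs, ← Real.sqrt_mul (by norm_num)]
    exact Real.sqrt_le_sqrt hx2
  have hrp : (1 - z) ^ (-(1/2) : ℝ) = (Real.sqrt (1 - z))⁻¹ := by
    rw [Real.sqrt_eq_rpow, ← Real.rpow_neg hs.le]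
  have hsq : 0 < Real.sqrt (1 - z) := Real.sqrt_pos.mpr hs
  rw [abs_mul, hrp, abs_of_nonneg (inv_nonneg.mpr hsq.le)]
  calc |x| * (Real.sqrt (1 - z))⁻¹ ≤ Real.sqrt 2 * Real.sqrt (1 - z) * (Real.sqrt (1 - z))⁻¹ :=
        mul_le_mul_of_nonneg_right hxa (inv_nonneg.mpr hsq.le)
    _ = Real.sqrt 2 := by field_simp

theorem control_term_over_lyapunov_vanishes (c α : ℝ) (hc : 0 < c) (hα : 1/2 < α) :
    ∀ ε > 0, ∃ δ > 0, ∀ x y z x' y' z' u : ℝ,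
      x ^ 2 + y ^ 2 + z ^ 2 ≤ 1 → x' ^ 2 + y' ^ 2 + z' ^ 2 ≤ 1 →
      1 - δ < z → z < 1 → 1 - δ < z' → z' < 1 →
      |u| ≤ c * (1 - z') ^ α →
      |u * ((1/2) * (x * (1 - z) ^ (-(1/2) : ℝ) + x' * (1 - z') ^ (-(1/2) : ℝ)))| /
          (Real.sqrt (1 - z) + Real.sqrt (1 - z')) < ε := by
  intro ε hε
  have hβ : (0:ℝ) < α - 1/2 := by linarith
  have hE : (0:ℝ) < ε / (Real.sqrt 2 * c) := by positivity
  refine ⟨(ε / (Real.sqrt 2 * c)) ^ (α - 1/2)⁻¹, by positivity, ?_⟩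
  intro x y z x' y' z' u h h' hz1 hz2 hz1' hz2' hu
  set t := 1 - z' with ht
  have htpos : (0:ℝ) < t := by simp [ht]; linarith
  have hspos : (0:ℝ) < 1 - z := by linarith
  have hsqt : 0 < Real.sqrt t := Real.sqrt_pos.mpr htpos
  have hD : 0 < Real.sqrt (1 - z) + Real.sqrt t :=
    lt_of_lt_of_le hsqt (le_add_of_nonneg_left (Real.sqrt_nonneg _))
  have hU : |(1/2 : ℝ) * (x * (1 - z) ^ (-(1/2) : ℝ) + x' * t ^ (-(1/2) : ℝ))| ≤ Real.sqrt 2 := by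
    have h1 := aux_U1_bound x y z h hz2
    have h2 := aux_U1_bound x' y' z' h' hz2'
    rw [abs_mul]
    calc |(1/2 : ℝ)| * |x * (1 - z) ^ (-(1/2) : ℝ) + x' * t ^ (-(1/2) : ℝ)|
        ≤ (1/2) * (Real.sqrt 2 + Real.sqrt 2) := by
          rw [abs_of_pos (by norm_num : (0:ℝ) < 1/2)]
          exact mul_le_mul_of_nonneg_left ((abs_add_le _ _).trans (add_le_add h1 h2)) (by norm_num)
      _ = Real.sqrt 2 := by ring
  -- key power inequality
  have hlt : t ^ (α - 1/2) < ε / (Real.sqrt 2 * c) := by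
    have : t < (ε / (Real.sqrt 2 * c)) ^ (α - 1/2)⁻¹ := by linarith
    calc t ^ (α - 1/2) < ((ε / (Real.sqrt 2 * c)) ^ (α - 1/2)⁻¹) ^ (α - 1/2) :=
          Real.rpow_lt_rpow htpos.le this hβ
      _ = ε / (Real.sqrt 2 * c) := Real.rpow_inv_rpow hE.le (ne_of_gt hβ)
  have hnum : |u * ((1/2) * (x * (1 - z) ^ (-(1/2) : ℝ) + x' * t ^ (-(1/2) : ℝ)))|
      ≤ Real.sqrt 2 * c * t ^ α := by
    rw [abs_mul]
    have h0 : 0 ≤ c * t ^ α := le_trans (abs_nonneg u) hu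
    calc |u| * _ ≤ (c * t ^ α) * Real.sqrt 2 := mul_le_mul hu hU (abs_nonneg _) h0
      _ = Real.sqrt 2 * c * t ^ α := by ring
  rw [div_lt_iff₀ hD]
  have htα : t ^ α = t ^ (α - 1/2) * Real.sqrt t := by
    rw [Real.sqrt_eq_rpow, ← Real.rpow_add htpos]
    ring_nf
  have key : Real.sqrt 2 * c * t ^ α < ε * Real.sqrt t := by
    rw [htα]
    have h2c : 0 < Real.sqrt 2 * c := by positivity
    calc Real.sqrt 2 * c * (t ^ (α - 1/2) * Real.sqrt t)
        < Real.sqrt 2 * c * (ε / (Real.sqrt 2 * c) * Real.sqrt t) := by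
          apply mul_lt_mul_of_pos_left _ h2c
          exact mul_lt_mul_of_pos_right hlt hsqt
      _ = ε * Real.sqrt t := by field_simp
  calc |u * ((1/2) * (x * (1 - z) ^ (-(1/2) : ℝ) + x' * t ^ (-(1/2) : ℝ)))|
      ≤ Real.sqrt 2 * c * t ^ α := hnum
    _ < ε * Real.sqrt t := key
    _ ≤ ε * (Real.sqrt (1 - z) + Real.sqrt t) := by
        apply mul_le_mul_of_nonneg_left _ hε.le
        linarith [Real.sqrt_nonneg (1 - z)]
end

section
/- Let η, η̂ ∈ (0,1] and M, M̂ > 0. Then the liminf, as (z,ẑ) → (1,1) with z, ẑ ∈ [−1,1) and (z,ẑ) ≠ (1,1), of [√(ηM)(1+z)√(1−z) + √(η̂M̂)(1+ẑ)√(1−ẑ)]² / (4(√(1−z) + √(1−ẑ))²) equals min{ηM, η̂M̂}. -/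
/-!
With `u = √(1 - z)` and `v = √(1 - ẑ)`, the diffusion coefficient `φ` is the weighted mean of
`a (1 + z) / 2` and `b (1 + ẑ) / 2` with weights `u` and `v`, where `a = √(ηM)`, `b = √(η̂M̂)`.
Both terms tend to `a` and `b` at the corner, so `φ² ≥ min (a (1 + z) / 2, b (1 + ẑ) / 2)²`
bounds the liminf below by `(min a b)²`. Along the curve `(1 - t², 1 - t⁴)` the weights are
`t` and `t²`, so all the weight goes to the first term and `φ² → a²`; along `(1 - t⁴, 1 - t²)`,
`φ² → b²`.
-/

open Filter Topology Set

theorem Filter.Tendsto.liminf_le_of_tendsto_comp {ι α β : Type*}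
    [ConditionallyCompleteLinearOrder β] [TopologicalSpace β] [OrderTopology β]
    {v : ι → α} {u : α → β} {f : Filter ι} {g : Filter α} [NeBot f] {c : β}
    (hv : Tendsto v f g) (hu : Tendsto (u ∘ v) f (𝓝 c))
    (hg : g.IsBoundedUnder (· ≥ ·) u := by isBoundedDefault) :
    liminf u g ≤ c :=
  hu.liminf_eq ▸ hv.liminf_le_liminf_comp hu.isCoboundedUnder_ge hg

theorem min_le_mul_add_mul_div_add {𝕜 : Type*} [Field 𝕜] [LinearOrder 𝕜] [IsStrictOrderedRing 𝕜]
    {u v x y : 𝕜} (hu : 0 ≤ u) (hv : 0 ≤ v) (huv : 0 < u + v) :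
    min x y ≤ (u * x + v * y) / (u + v) := by
  rw [le_div_iff₀ huv]
  nlinarith [mul_le_mul_of_nonneg_left (min_le_left x y) hu,
    mul_le_mul_of_nonneg_left (min_le_right x y) hv]

/-- The squared diffusion coefficient `φ²`, with `a = √(ηM)` and `b = √(η̂M̂)`. -/
noncomputable def diffusionSq (a b : ℝ) (p : ℝ × ℝ) : ℝ :=
  (a * (1 + p.1) * √(1 - p.1) + b * (1 + p.2) * √(1 - p.2)) ^ 2
    / (4 * (√(1 - p.1) + √(1 - p.2)) ^ 2)

def puncturedSquare : Set (ℝ × ℝ) := (Ico (-1) 1 ×ˢ Ico (-1) 1) \ {(1, 1)}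

theorem tendsto_one_sub_pow_puncturedSquare {m n : ℕ} (hm : m ≠ 0) (hn : n ≠ 0) :
    Tendsto (fun t : ℝ => (1 - t ^ m, 1 - t ^ n)) (𝓝[>] 0) (𝓝[puncturedSquare] (1, 1)) := by
  refine tendsto_nhdsWithin_iff.mpr ⟨?_, ?_⟩
  · refine (Continuous.tendsto' ?_ 0 (1, 1) ?_).mono_left nhdsWithin_le_nhds
    · fun_prop
    · simp [hm, hn]
  · filter_upwards [Ioo_mem_nhdsGT one_pos] with t ⟨ht₀, ht₁⟩
    have hm₁ : t ^ m < 1 := pow_lt_one₀ ht₀.le ht₁ hm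
    have hn₁ : t ^ n < 1 := pow_lt_one₀ ht₀.le ht₁ hn
    have hm₀ : 0 < t ^ m := pow_pos ht₀ m
    have hn₀ : 0 < t ^ n := pow_pos ht₀ n
    refine ⟨⟨⟨by linarith, by linarith⟩, ⟨by linarith, by linarith⟩⟩, ?_⟩
    simp [hm₀.ne']

instance : (𝓝[puncturedSquare] ((1 : ℝ), (1 : ℝ))).NeBot :=
  (tendsto_one_sub_pow_puncturedSquare one_ne_zero one_ne_zero).neBot

namespace diffusionSq

theorem eq_sq_mul_add_mul_div_add (a b : ℝ) (p : ℝ × ℝ) :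
    diffusionSq a b p = ((√(1 - p.1) * (a * (1 + p.1) / 2) + √(1 - p.2) * (b * (1 + p.2) / 2))
      / (√(1 - p.1) + √(1 - p.2))) ^ 2 := by
  rw [diffusionSq, mul_comm 4, show (4 : ℝ) = 2 ^ 2 by norm_num, ← mul_pow, ← div_pow, ← div_div]
  ring

theorem nonneg (a b : ℝ) (p : ℝ × ℝ) : 0 ≤ diffusionSq a b p := by
  unfold diffusionSq; positivity

theorem min_sq_le {a b : ℝ} (ha : 0 ≤ a) (hb : 0 ≤ b) {p : ℝ × ℝ} (h₁ : -1 ≤ p.1) (h₂ : -1 ≤ p.2)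
    (hp : p.1 < 1) :
    min (a * (1 + p.1) / 2) (b * (1 + p.2) / 2) ^ 2 ≤ diffusionSq a b p := by
  have hu : 0 < √(1 - p.1) := Real.sqrt_pos.mpr (by linarith)
  rw [eq_sq_mul_add_mul_div_add]
  refine pow_le_pow_left₀ (le_min (by nlinarith) (by nlinarith)) ?_ 2
  exact min_le_mul_add_mul_div_add hu.le (Real.sqrt_nonneg _)
    (add_pos_of_pos_of_nonneg hu (Real.sqrt_nonneg _))

theorem tendsto_along_one_sub_sq_one_sub_pow_four (a b : ℝ) :
    Tendsto (fun t : ℝ => diffusionSq a b (1 - t ^ 2, 1 - t ^ 4)) (𝓝[>] 0) (𝓝 (a ^ 2)) := by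
  have hcont : ContinuousAt (fun t : ℝ => ((a * (2 - t ^ 2) + b * (2 - t ^ 4) * t)
      / (2 * (1 + t))) ^ 2) 0 := by
    refine ((ContinuousAt.div ?_ ?_ (by norm_num)).pow 2) <;> fun_prop
  have hlim := hcont.tendsto.mono_left (nhdsWithin_le_nhds (s := Ioi 0))
  norm_num at hlim
  refine hlim.congr' ?_
  filter_upwards [self_mem_nhdsWithin] with t (ht : 0 < t)
  have h₁ : √(1 - (1 - t ^ 2)) = t := by rw [sub_sub_cancel, Real.sqrt_sq ht.le]
  have h₂ : √(1 - (1 - t ^ 4)) = t ^ 2 := by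
    rw [sub_sub_cancel, show t ^ 4 = (t ^ 2) ^ 2 by ring, Real.sqrt_sq (sq_nonneg t)]
  rw [diffusionSq, h₁, h₂]
  field_simp
  ring

theorem swap (a b : ℝ) (p : ℝ × ℝ) : diffusionSq a b p.swap = diffusionSq b a p := by
  simp only [diffusionSq, Prod.fst_swap, Prod.snd_swap, add_comm]

theorem liminf_le_sq_left (a b : ℝ) :
    liminf (diffusionSq a b) (𝓝[puncturedSquare] (1, 1)) ≤ a ^ 2 :=
  (tendsto_one_sub_pow_puncturedSquare two_ne_zero four_ne_zero).liminf_le_of_tendsto_comp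
    (tendsto_along_one_sub_sq_one_sub_pow_four a b) (isBoundedUnder_of ⟨0, nonneg a b⟩)

theorem liminf_le_sq_right (a b : ℝ) :
    liminf (diffusionSq a b) (𝓝[puncturedSquare] (1, 1)) ≤ b ^ 2 :=
  (tendsto_one_sub_pow_puncturedSquare four_ne_zero two_ne_zero).liminf_le_of_tendsto_comp
    ((tendsto_along_one_sub_sq_one_sub_pow_four b a).congr fun t =>
      (swap a b (1 - t ^ 2, 1 - t ^ 4)).symm)
    (isBoundedUnder_of ⟨0, nonneg a b⟩)

theorem min_sq_le_liminf {a b : ℝ} (ha : 0 ≤ a) (hb : 0 ≤ b) :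
    min a b ^ 2 ≤ liminf (diffusionSq a b) (𝓝[puncturedSquare] (1, 1)) := by
  have hlim : Tendsto (fun p : ℝ × ℝ => min (a * (1 + p.1) / 2) (b * (1 + p.2) / 2) ^ 2)
      (𝓝[puncturedSquare] (1, 1)) (𝓝 (min a b ^ 2)) := by
    refine (Continuous.tendsto' ?_ (1, 1) _ ?_).mono_left nhdsWithin_le_nhds
    · fun_prop
    · norm_num
  have hcobdd : (𝓝[puncturedSquare] ((1 : ℝ), (1 : ℝ))).IsCoboundedUnder (· ≥ ·)
      (diffusionSq a b) :=
    (tendsto_along_one_sub_sq_one_sub_pow_four a b).isCoboundedUnder_ge.mono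
      (map_mono (tendsto_one_sub_pow_puncturedSquare two_ne_zero four_ne_zero))
  rw [← hlim.liminf_eq]
  refine liminf_le_liminf ?_ (isBoundedUnder_of ⟨0, fun _ => sq_nonneg _⟩) hcobdd
  filter_upwards [self_mem_nhdsWithin] with p ⟨⟨h₁, h₂⟩, _⟩
  exact min_sq_le ha hb h₁.1 h₂.1 h₁.2

theorem liminf_eq {a b : ℝ} (ha : 0 ≤ a) (hb : 0 ≤ b) :
    liminf (diffusionSq a b) (𝓝[puncturedSquare] (1, 1)) = min a b ^ 2 := by
  refine le_antisymm ?_ (min_sq_le_liminf ha hb)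
  rcases min_choice a b with h | h <;> rw [h]
  exacts [liminf_le_sq_left a b, liminf_le_sq_right a b]

end diffusionSq

theorem liminf_diffusion_coefficient_squared (η η' M M' : ℝ)
    (hη : η ∈ Set.Ioc (0 : ℝ) 1) (hη' : η' ∈ Set.Ioc (0 : ℝ) 1)
    (hM : 0 < M) (hM' : 0 < M') :
    liminf (fun p : ℝ × ℝ =>
        (Real.sqrt (η * M) * (1 + p.1) * Real.sqrt (1 - p.1)
            + Real.sqrt (η' * M') * (1 + p.2) * Real.sqrt (1 - p.2)) ^ 2
          / (4 * (Real.sqrt (1 - p.1) + Real.sqrt (1 - p.2)) ^ 2))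
        (nhdsWithin ((1 : ℝ), (1 : ℝ))
          ((Set.Ico (-1 : ℝ) 1 ×ˢ Set.Ico (-1 : ℝ) 1) \ {((1 : ℝ), (1 : ℝ))}))
      = min (η * M) (η' * M') := by
  have hηM : 0 ≤ η * M := (mul_pos hη.1 hM).le
  have hηM' : 0 ≤ η' * M' := (mul_pos hη'.1 hM').le
  have h := diffusionSq.liminf_eq (Real.sqrt_nonneg (η * M)) (Real.sqrt_nonneg (η' * M'))
  rwa [← Real.sqrt_monotone.map_min, Real.sq_sqrt (le_min hηM hηM')] at h
end
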